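/- Let Λ ≠ ℕ be a numerical semigroup with conductor c = c(Λ) and multiplicity m = m(Λ). Then the right generators of Λ are exactly the integers λ with c ≤ λ < c+m that are not the sum of two left elements of Λ; hence the number of children of Λ equals the number of such integers. In particular, the nontrivial ordinary semigroup {0} ∪ {n : n ≥ m} (m ≥ 2) has exactly m children, and the rank-2 semigroup {0, m} ∪ {n : n ≥ m+u} with 1 < u ≤ m has exactly m−1 children. -/

import Mathlib

/-- A numerical semigroup: a cofinite submonoid of ℕ, viewed as a set of naturals. -/
def IsNumericalSemigroup (S : Set ℕ) : Prop :=
  0 ∈ S ∧ (∀ a ∈ S, ∀ b ∈ S, a + b ∈ S) ∧ ∃ N : ℕ, ∀ n : ℕ, N ≤ n → n ∈ S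

/-- The conductor: the smallest `N` such that every `n ≥ N` belongs to `S`. -/
noncomputable def sgConductor (S : Set ℕ) : ℕ :=
  sInf {N : ℕ | ∀ n : ℕ, N ≤ n → n ∈ S}

/-- The genus: the number of gaps. -/
noncomputable def sgGenus (S : Set ℕ) : ℕ :=
  Sᶜ.ncard

/-- The rank `k(Λ) = c(Λ) - g(Λ)`. -/
noncomputable def sgRank (S : Set ℕ) : ℕ :=
  sgConductor S - sgGenus S

/-- The multiplicity: the smallest nonzero element. -/
noncomputable def sgMultiplicity (S : Set ℕ) : ℕ :=
  sInf {n : ℕ | n ∈ S ∧ n ≠ 0}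

/-- The Frobenius number: the largest gap, i.e. the conductor minus one. -/
noncomputable def sgFrobenius (S : Set ℕ) : ℕ :=
  sgConductor S - 1

/-- `sgElem S j` is the element `λ_j` of `S = {λ_0 = 0 < λ_1 < λ_2 < ⋯}`. -/
noncomputable def sgElem (S : Set ℕ) (j : ℕ) : ℕ :=
  Nat.nth (· ∈ S) j

/-- The jump `u_j = λ_{j+1} - λ_j`. -/
noncomputable def sgJump (S : Set ℕ) (j : ℕ) : ℕ :=
  sgElem S (j + 1) - sgElem S j

/-- The left elements: elements of `S` smaller than the Frobenius number. -/
def sgLeftElements (S : Set ℕ) : Set ℕ :=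
  {x : ℕ | x ∈ S ∧ x + 1 < sgConductor S}

/-- A minimal generator: a nonzero element not the sum of two nonzero elements. -/
def IsMinimalGenerator (S : Set ℕ) (x : ℕ) : Prop :=
  x ∈ S ∧ x ≠ 0 ∧ ¬ ∃ a ∈ S, ∃ b ∈ S, a ≠ 0 ∧ b ≠ 0 ∧ a + b = x

/-- A right generator: a minimal generator larger than the Frobenius number. -/
def IsRightGenerator (S : Set ℕ) (x : ℕ) : Prop :=
  IsMinimalGenerator S x ∧ sgFrobenius S < x

/-- A strong generator: a right generator `μ` such that `μ + m(Λ)` is a minimal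
generator of `Λ ∖ {μ}`. -/
noncomputable def IsStrongGenerator (S : Set ℕ) (x : ℕ) : Prop :=
  IsRightGenerator S x ∧ IsMinimalGenerator (S \ {x}) (x + sgMultiplicity S)

/-- A new generator of `Λ`: a minimal generator of `Λ` that is not a minimal
generator of `Λ ∪ {F(Λ)}`. -/
noncomputable def IsNewGenerator (S : Set ℕ) (x : ℕ) : Prop :=
  IsMinimalGenerator S x ∧ ¬ IsMinimalGenerator (S ∪ {sgFrobenius S}) x

/-- `x` (an element `λ_s ≥ c(Λ)`) is an order-`p` seed of `Λ` if
`x + λ_p ≠ λ_i + λ_j` for all `p < i ≤ j < s`, i.e. for all `i ≤ j` with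
`p < i` and `λ_j < x`. -/
noncomputable def IsSeed (S : Set ℕ) (p x : ℕ) : Prop :=
  sgConductor S ≤ x ∧ ∀ i j : ℕ, p < i → i ≤ j → sgElem S j < x →
    x + sgElem S p ≠ sgElem S i + sgElem S j

/-- `T` is a child of `S`: obtained by removing one right generator. -/
def IsChild (T S : Set ℕ) : Prop :=
  ∃ μ : ℕ, IsRightGenerator S μ ∧ T = S \ {μ}

/-- A grandchild: a child of a child. -/
def IsGrandchild (T S : Set ℕ) : Prop :=
  ∃ C : Set ℕ, IsChild C S ∧ IsChild T C

/-- A great-grandchild: a child of a grandchild. -/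
def IsGreatGrandchild (T S : Set ℕ) : Prop :=
  ∃ C : Set ℕ, IsGrandchild C S ∧ IsChild T C

/-- `⟨a,b,c,…⟩|_κ`: the smallest numerical semigroup containing a given set. -/
def sgClosure (A : Set ℕ) : Set ℕ :=
  ⋂₀ {S : Set ℕ | IsNumericalSemigroup S ∧ A ⊆ S}


/-!
With `c` the conductor and `m` the multiplicity: a right generator `μ` satisfies `μ < c + m`,
since otherwise `μ = m + (μ - m)` with `μ - m ≥ c`. For `c ≤ μ < c + m`, a decomposition
`μ = a + b` into nonzero elements has `a, b ≤ μ - m < c`, and neither summand is the gap `c - 1`,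
so both are left elements. Distinct right generators give distinct children, so the children
are counted by these `μ`. In the two examples the left elements are `{0}` and `{0, m}`, and the
only sum of two of them in `[c, c + m)` is `2m` in the second.
-/

section

variable {S : Set ℕ}

theorem sgMultiplicity_le {n : ℕ} (hn : n ∈ S) (hn0 : n ≠ 0) :
    sgMultiplicity S ≤ n :=
  Nat.sInf_le ⟨hn, hn0⟩

theorem mem_sgLeftElements {a : ℕ} :
    a ∈ sgLeftElements S ↔ a ∈ S ∧ a + 1 < sgConductor S :=
  Iff.rfl

theorem sgConductor_eq_of_sub_one_notMem {c : ℕ} (hc : ∀ n, c ≤ n → n ∈ S) (hgap : c - 1 ∉ S) :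
    sgConductor S = c := by
  have hle : sgConductor S ≤ c := Nat.sInf_le hc
  have hmem : ∀ n, sgConductor S ≤ n → n ∈ S :=
    Nat.sInf_mem (s := {N | ∀ n, N ≤ n → n ∈ S}) ⟨c, hc⟩
  by_contra hneq
  exact hgap (hmem _ (by omega))

theorem sgMultiplicity_eq_of_forall_lt {m : ℕ} (hm : m ∈ S) (hm0 : m ≠ 0)
    (hmin : ∀ n ∈ S, n < m → n = 0) : sgMultiplicity S = m := by
  obtain ⟨hmem, hne0⟩ : sgMultiplicity S ∈ S ∧ sgMultiplicity S ≠ 0 :=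
    Nat.sInf_mem (s := {n | n ∈ S ∧ n ≠ 0}) ⟨m, hm, hm0⟩
  have hle := sgMultiplicity_le hm hm0
  by_contra hneq
  exact hne0 (hmin _ hmem (by omega))

end

namespace IsNumericalSemigroup

variable {S : Set ℕ}

theorem mem_of_sgConductor_le (hS : IsNumericalSemigroup S) {n : ℕ} (hn : sgConductor S ≤ n) :
    n ∈ S :=
  Nat.sInf_mem hS.2.2 n hn

theorem sgConductor_pos (hS : IsNumericalSemigroup S) (hne : S ≠ Set.univ) :
    0 < sgConductor S := by
  refine Nat.pos_of_ne_zero fun h0 => hne (Set.eq_univ_of_forall fun n => ?_)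
  exact hS.mem_of_sgConductor_le (by omega)

theorem sgConductor_sub_one_notMem (hS : IsNumericalSemigroup S) (hne : S ≠ Set.univ) :
    sgConductor S - 1 ∉ S := by
  intro hmem
  have hc := hS.sgConductor_pos hne
  have hle : sgConductor S ≤ sgConductor S - 1 := Nat.sInf_le fun n hn => by
    rcases hn.eq_or_lt with rfl | hlt
    · exact hmem
    · exact hS.mem_of_sgConductor_le (by omega)
  omega

theorem sgMultiplicity_mem (hS : IsNumericalSemigroup S) (hne : S ≠ Set.univ) :
    sgMultiplicity S ∈ S ∧ sgMultiplicity S ≠ 0 :=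
  Nat.sInf_mem (s := {n | n ∈ S ∧ n ≠ 0})
    ⟨sgConductor S, hS.mem_of_sgConductor_le le_rfl, (hS.sgConductor_pos hne).ne'⟩

theorem mem_sgLeftElements_of_add_lt (hS : IsNumericalSemigroup S) (hne : S ≠ Set.univ)
    {a b : ℕ} (ha : a ∈ S) (hb : b ∈ S) (hb0 : b ≠ 0)
    (hlt : a + b < sgConductor S + sgMultiplicity S) : a ∈ sgLeftElements S := by
  have hmb : sgMultiplicity S ≤ b := sgMultiplicity_le hb hb0
  have haF : a ≠ sgConductor S - 1 := fun h => hS.sgConductor_sub_one_notMem hne (h ▸ ha)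
  exact mem_sgLeftElements.2 ⟨ha, by omega⟩

theorem isRightGenerator_iff (hS : IsNumericalSemigroup S) (hne : S ≠ Set.univ) (μ : ℕ) :
    IsRightGenerator S μ ↔
      (sgConductor S ≤ μ ∧ μ < sgConductor S + sgMultiplicity S ∧
        ¬ ∃ a ∈ sgLeftElements S, ∃ b ∈ sgLeftElements S, a + b = μ) := by
  have hc := hS.sgConductor_pos hne
  obtain ⟨hmS, hm0⟩ := hS.sgMultiplicity_mem hne
  constructor
  · rintro ⟨⟨-, -, hmin⟩, hFμ⟩
    have hcμ : sgConductor S ≤ μ := by unfold sgFrobenius at hFμ; omega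
    refine ⟨hcμ, ?_, ?_⟩
    · by_contra! hge
      exact hmin ⟨_, hmS, μ - sgMultiplicity S, hS.mem_of_sgConductor_le (by omega), hm0,
        by omega, by omega⟩
    · rintro ⟨a, ha, b, hb, hab⟩
      rw [mem_sgLeftElements] at ha hb
      exact hmin ⟨a, ha.1, b, hb.1, by omega, by omega, hab⟩
  · rintro ⟨hcμ, hlt, hsum⟩
    refine ⟨⟨hS.mem_of_sgConductor_le hcμ, by omega, ?_⟩, by unfold sgFrobenius; omega⟩
    rintro ⟨a, ha, b, hb, ha0, hb0, rfl⟩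
    exact hsum ⟨a, hS.mem_sgLeftElements_of_add_lt hne ha hb hb0 hlt,
      b, hS.mem_sgLeftElements_of_add_lt hne hb ha ha0 (by omega), rfl⟩

theorem ncard_children (hS : IsNumericalSemigroup S) (hne : S ≠ Set.univ) :
    {T : Set ℕ | IsChild T S}.ncard =
      {μ : ℕ | sgConductor S ≤ μ ∧ μ < sgConductor S + sgMultiplicity S ∧
        ¬ ∃ a ∈ sgLeftElements S, ∃ b ∈ sgLeftElements S, a + b = μ}.ncard := by
  have hchildren :
      {T : Set ℕ | IsChild T S} = (fun μ => S \ {μ}) '' {μ | IsRightGenerator S μ} := by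
    ext T
    simp only [IsChild, Set.mem_ofPred_eq, Set.mem_image, eq_comm]
  have hinj : Set.InjOn (fun μ => S \ {μ}) {μ | IsRightGenerator S μ} := by
    intro a ha b _ (hab : S \ {a} = S \ {b})
    by_contra hab'
    exact ((Set.ext_iff.1 hab a).2 ⟨ha.1.1, hab'⟩).2 rfl
  rw [hchildren, hinj.ncard_image]
  simp only [hS.isRightGenerator_iff hne]

end IsNumericalSemigroup

section Ordinary

def ordinarySemigroup (m : ℕ) : Set ℕ :=
  {0} ∪ {n | m ≤ n}

variable {m : ℕ}

theorem mem_ordinarySemigroup {x : ℕ} : x ∈ ordinarySemigroup m ↔ x = 0 ∨ m ≤ x :=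
  Iff.rfl

theorem isNumericalSemigroup_ordinarySemigroup : IsNumericalSemigroup (ordinarySemigroup m) := by
  refine ⟨.inl rfl, fun a ha b hb => ?_, m, fun _ => .inr⟩
  rw [mem_ordinarySemigroup] at *
  omega

theorem ordinarySemigroup_ne_univ (hm : 2 ≤ m) : ordinarySemigroup m ≠ Set.univ :=
  (Set.ne_univ_iff_exists_notMem _).2 ⟨1, by rw [mem_ordinarySemigroup]; omega⟩

theorem sgConductor_ordinarySemigroup (hm : 2 ≤ m) : sgConductor (ordinarySemigroup m) = m :=
  sgConductor_eq_of_sub_one_notMem (fun _ => .inr) (by rw [mem_ordinarySemigroup]; omega)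

theorem sgMultiplicity_ordinarySemigroup (hm : 2 ≤ m) :
    sgMultiplicity (ordinarySemigroup m) = m :=
  sgMultiplicity_eq_of_forall_lt (mem_ordinarySemigroup.2 (.inr le_rfl)) (by omega)
    (fun n hn hlt => by rw [mem_ordinarySemigroup] at hn; omega)

theorem sgLeftElements_ordinarySemigroup (hm : 2 ≤ m) :
    sgLeftElements (ordinarySemigroup m) = {0} := by
  ext x
  rw [mem_sgLeftElements, mem_ordinarySemigroup, sgConductor_ordinarySemigroup hm,
    Set.mem_singleton_iff]
  omega

theorem ncard_children_ordinarySemigroup (hm : 2 ≤ m) :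
    {T : Set ℕ | IsChild T (ordinarySemigroup m)}.ncard = m := by
  rw [isNumericalSemigroup_ordinarySemigroup.ncard_children (ordinarySemigroup_ne_univ hm),
    sgConductor_ordinarySemigroup hm, sgMultiplicity_ordinarySemigroup hm,
    sgLeftElements_ordinarySemigroup hm]
  have hset : {μ | m ≤ μ ∧ μ < m + m ∧ ¬ ∃ a ∈ ({0} : Set ℕ), ∃ b ∈ ({0} : Set ℕ), a + b = μ} =
      Set.Ico m (m + m) := by
    ext μ
    simp only [Set.mem_ofPred_eq, Set.mem_Ico, Set.mem_singleton_iff, exists_eq_left]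
    omega
  rw [hset, Set.ncard_Ico_nat]
  omega

end Ordinary

section RankTwo

def rankTwoSemigroup (m u : ℕ) : Set ℕ :=
  {0, m} ∪ {n | m + u ≤ n}

variable {m u : ℕ}

theorem mem_rankTwoSemigroup {x : ℕ} : x ∈ rankTwoSemigroup m u ↔ x = 0 ∨ x = m ∨ m + u ≤ x := by
  simp only [rankTwoSemigroup, Set.mem_union, Set.mem_insert_iff, Set.mem_singleton_iff,
    Set.mem_ofPred_eq, or_assoc]

theorem isNumericalSemigroup_rankTwoSemigroup (hum : u ≤ m) :
    IsNumericalSemigroup (rankTwoSemigroup m u) := by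
  refine ⟨mem_rankTwoSemigroup.2 (.inl rfl), fun a ha b hb => ?_, m + u,
    fun _ h => mem_rankTwoSemigroup.2 (.inr (.inr h))⟩
  rw [mem_rankTwoSemigroup] at *
  omega

theorem rankTwoSemigroup_ne_univ (hu : 1 < u) : rankTwoSemigroup m u ≠ Set.univ :=
  (Set.ne_univ_iff_exists_notMem _).2 ⟨m + u - 1, by rw [mem_rankTwoSemigroup]; omega⟩

theorem sgConductor_rankTwoSemigroup (hu : 1 < u) : sgConductor (rankTwoSemigroup m u) = m + u :=
  sgConductor_eq_of_sub_one_notMem (fun _ h => mem_rankTwoSemigroup.2 (.inr (.inr h)))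
    (by rw [mem_rankTwoSemigroup]; omega)

theorem sgMultiplicity_rankTwoSemigroup (hu : 1 < u) (hum : u ≤ m) :
    sgMultiplicity (rankTwoSemigroup m u) = m :=
  sgMultiplicity_eq_of_forall_lt (mem_rankTwoSemigroup.2 (.inr (.inl rfl))) (by omega)
    (fun n hn hlt => by rw [mem_rankTwoSemigroup] at hn; omega)

theorem sgLeftElements_rankTwoSemigroup (hu : 1 < u) :
    sgLeftElements (rankTwoSemigroup m u) = {0, m} := by
  ext x
  rw [mem_sgLeftElements, mem_rankTwoSemigroup, sgConductor_rankTwoSemigroup hu,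
    Set.mem_insert_iff, Set.mem_singleton_iff]
  omega

theorem ncard_children_rankTwoSemigroup (hu : 1 < u) (hum : u ≤ m) :
    {T : Set ℕ | IsChild T (rankTwoSemigroup m u)}.ncard = m - 1 := by
  rw [(isNumericalSemigroup_rankTwoSemigroup hum).ncard_children (rankTwoSemigroup_ne_univ hu),
    sgConductor_rankTwoSemigroup hu, sgMultiplicity_rankTwoSemigroup hu hum,
    sgLeftElements_rankTwoSemigroup hu]
  have hset : {μ | m + u ≤ μ ∧ μ < m + u + m ∧
      ¬ ∃ a ∈ ({0, m} : Set ℕ), ∃ b ∈ ({0, m} : Set ℕ), a + b = μ} =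
      Set.Ico (m + u) (m + u + m) \ {m + m} := by
    ext μ
    simp only [Set.mem_ofPred_eq, Set.mem_sdiff, Set.mem_Ico, Set.mem_insert_iff,
      Set.mem_singleton_iff, exists_eq_or_imp, exists_eq_left]
    omega
  rw [hset, Set.ncard_sdiff_singleton_of_mem (Set.mem_Ico.2 ⟨by omega, by omega⟩),
    Set.ncard_Ico_nat]
  omega

end RankTwo

theorem statement8 :
    (∀ S : Set ℕ, IsNumericalSemigroup S → S ≠ Set.univ →
      ((∀ μ : ℕ, IsRightGenerator S μ ↔
          (sgConductor S ≤ μ ∧ μ < sgConductor S + sgMultiplicity S ∧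
            ¬ ∃ a ∈ sgLeftElements S, ∃ b ∈ sgLeftElements S, a + b = μ)) ∧
        {T : Set ℕ | IsChild T S}.ncard =
          {μ : ℕ | sgConductor S ≤ μ ∧ μ < sgConductor S + sgMultiplicity S ∧
            ¬ ∃ a ∈ sgLeftElements S, ∃ b ∈ sgLeftElements S, a + b = μ}.ncard)) ∧
    (∀ m : ℕ, 2 ≤ m →
      {T : Set ℕ | IsChild T (({0} : Set ℕ) ∪ {n : ℕ | m ≤ n})}.ncard = m) ∧
    (∀ m u : ℕ, 1 < u → u ≤ m →
      {T : Set ℕ | IsChild T (({0, m} : Set ℕ) ∪ {n : ℕ | m + u ≤ n})}.ncard = m - 1) :=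
  ⟨fun _ hS hne => ⟨hS.isRightGenerator_iff hne, hS.ncard_children hne⟩,
    fun _ hm => ncard_children_ordinarySemigroup hm,
    fun _ _ hu hum => ncard_children_rankTwoSemigroup hu hum⟩
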